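/- Under the deterministic multi-agent SIR recursion, the infection stopwatch has the closed form: for every agent i ∈ V with k_i < ∞ and every k ∈ ℕ, s_i(k) = 0 if k ≤ k_i, s_i(k) = R_i + 1 if k ≥ k_i + R_i + 1, and s_i(k) = k − k_i otherwise; moreover if k_i = ∞ then s_i(k) = 0 for all k. -/

import Mathlib

/-! Because every term of the contagion input is nonnegative, an agent that is infected at time
`k` is still infected at `k + 1` as long as its stopwatch is below `R_i`, and once the stopwatch
reaches `R_i` the agent is never infected again. So after the first infection time `k_i` the agent
is infected exactly at the times `k_i, …, k_i + R_i`, and `s_i(k)` counts how many of those lie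
before `k`. As states live in `ℕ`, the bound `x_i ≤ 1` is what turns `x_i(n) ≠ 1` for
`n < k_i` into `x_i(n) = 0`. -/

open Finset

/-- The step function `ρ : ℤ → {0,1}`, `ρ(z) = 1` iff `z > 0`. -/
def stepFn (z : ℤ) : ℕ := if 0 < z then 1 else 0

theorem stepFn_le_one (z : ℤ) : stepFn z ≤ 1 := by
  unfold stepFn; split <;> simp

theorem stepFn_of_pos {z : ℤ} (hz : 0 < z) : stepFn z = 1 := if_pos hz

theorem stepFn_of_nonpos {z : ℤ} (hz : z ≤ 0) : stepFn z = 0 := if_neg hz.not_gt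

namespace ENat

theorem sInf_setOf_natCast_eq_top {p : ℕ → Prop}
    (h : sInf {n : ℕ∞ | ∃ m : ℕ, p m ∧ n = m} = ⊤) (n : ℕ) : ¬ p n := fun hn =>
  natCast_ne_top n (top_le_iff.mp (h ▸ sInf_le ⟨n, hn, rfl⟩))

theorem sInf_setOf_natCast_eq_natCast {p : ℕ → Prop} {m : ℕ}
    (h : sInf {n : ℕ∞ | ∃ m : ℕ, p m ∧ n = m} = m) : p m ∧ ∀ n < m, ¬ p n := by
  set S := {n : ℕ∞ | ∃ m : ℕ, p m ∧ n = m}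
  have hS : S.Nonempty := by
    by_contra hS
    rw [Set.not_nonempty_iff_eq_empty.mp hS, sInf_empty] at h
    exact natCast_ne_top m h.symm
  obtain ⟨k, hk, hkS⟩ := csInf_mem hS
  refine ⟨by rwa [← Nat.cast_inj.mp (hkS.symm.trans h)], fun n hnm hn => ?_⟩
  have : (m : ℕ∞) ≤ n := h ▸ sInf_le ⟨n, hn, rfl⟩
  exact (Nat.cast_le.mp this).not_gt hnm

end ENat

section Stopwatch

variable {a t : ℕ → ℕ}

theorem stopwatch_eq_zero (ht0 : t 0 = 0) (ht : ∀ k, t (k + 1) = t k + a k)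
    (ha : ∀ n, a n = 0) (k : ℕ) : t k = 0 := by
  induction k with
  | zero => exact ht0
  | succ k ih => rw [ht, ih, ha]

theorem stopwatch_eq_closedForm {R m : ℕ} (ht0 : t 0 = 0) (ht : ∀ k, t (k + 1) = t k + a k)
    (hpersist : ∀ k, a k = 1 → t k < R → a (k + 1) = 1)
    (hrecover : ∀ k, R ≤ t k → a (k + 1) = 0)
    (hbefore : ∀ n < m, a n = 0) (hm : a m = 1) (k : ℕ) :
    t k = if k ≤ m then 0 else if m + R + 1 ≤ k then R + 1 else k - m := by
  suffices h : ∀ k, (t k = if k ≤ m then 0 else if m + R + 1 ≤ k then R + 1 else k - m) ∧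
      a k = if m ≤ k ∧ k ≤ m + R then 1 else 0 from (h k).1
  intro k
  induction k with
  | zero =>
    rcases Nat.eq_zero_or_pos m with rfl | hm0
    · simp [ht0, hm]
    · simp [ht0, hbefore 0 hm0, hm0.ne']
  | succ k ih =>
    obtain ⟨htk, hak⟩ := ih
    refine ⟨by rw [ht, htk, hak]; split_ifs <;> omega, ?_⟩
    by_cases hk : k + 1 < m
    · rw [hbefore _ hk, if_neg (by omega)]
    by_cases hk' : k + 1 = m
    · rw [hk', hm, if_pos (by omega)]
    by_cases hk'' : k < m + R
    · rw [hpersist k (by rw [hak, if_pos (by omega)]) (by rw [htk]; split_ifs <;> omega),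
        if_pos (by omega)]
    · rw [hrecover k (by rw [htk]; split_ifs <;> omega), if_neg (by omega)]

end Stopwatch

theorem stmt5_general {V : Type*} [Fintype V] [DecidableEq V]
    (E : V → V → Prop) [DecidableRel E]
    (R : V → ℕ)
    (c : ℕ → V → V → ℕ)
    (u : ℕ → V → ℕ)
    (x0 : V → ℕ) (hx0 : ∀ i, x0 i ≤ 1)
    (x s : ℕ → V → ℕ)
    (hx_init : ∀ i, x 0 i = x0 i)
    (hs_init : ∀ i, s 0 i = 0)
    (hx_rec : ∀ k i, x (k + 1) i =
      stepFn ((R i : ℤ) - (s k i : ℤ)) *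
        stepFn ((x k i : ℤ) +
          (∑ j ∈ Finset.univ.filter (fun j => E j i), (c k i j : ℤ) * (x k j : ℤ)) +
          (u k i : ℤ)))
    (hs_rec : ∀ k i, s (k + 1) i = s k i + x k i)
    (ki : V → ℕ∞)
    (hki : ∀ i, ki i = sInf {n : ℕ∞ | ∃ m : ℕ, x m i = 1 ∧ n = (m : ℕ∞)}) :
    ∀ i : V,
      (∀ m : ℕ, ki i = (m : ℕ∞) → ∀ k : ℕ,
        s k i = if k ≤ m then 0 else if m + R i + 1 ≤ k then R i + 1 else k - m) ∧
      (ki i = ⊤ → ∀ k : ℕ, s k i = 0) := by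
  intro i
  have hx_le_one : ∀ k, x k i ≤ 1
    | 0 => hx_init i ▸ hx0 i
    | k + 1 => hx_rec k i ▸ mul_le_one' (stepFn_le_one _) (stepFn_le_one _)
  have hpersist : ∀ k, x k i = 1 → s k i < R i → x (k + 1) i = 1 := by
    intro k hx hs
    rw [hx_rec, stepFn_of_pos (by omega), stepFn_of_pos (by rw [hx]; positivity), one_mul]
  have hrecover : ∀ k, R i ≤ s k i → x (k + 1) i = 0 := fun k hs => by
    rw [hx_rec, stepFn_of_nonpos (by omega), zero_mul]
  refine ⟨fun m hm => ?_, fun htop => ?_⟩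
  · obtain ⟨hxm, hbefore⟩ := ENat.sInf_setOf_natCast_eq_natCast (hki i ▸ hm)
    exact stopwatch_eq_closedForm (hs_init i) (hs_rec · i) hpersist hrecover
      (fun n hn => by have := hbefore n hn; have := hx_le_one n; omega) hxm
  · have hnever := ENat.sInf_setOf_natCast_eq_top (hki i ▸ htop)
    exact stopwatch_eq_zero (hs_init i) (hs_rec · i)
      (fun n => by have := hnever n; have := hx_le_one n; omega)

/-- Closed form of the infection stopwatch: for every agent `i` with `k_i < ∞` and every
`k`, `s_i(k) = 0` if `k ≤ k_i`, `s_i(k) = R_i + 1` if `k ≥ k_i + R_i + 1`, and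
`s_i(k) = k − k_i` otherwise; if `k_i = ∞` then `s_i(k) = 0` for all `k`. -/
theorem stmt5 {V : Type*} [Fintype V] [DecidableEq V]
    (E : V → V → Prop) [DecidableRel E]
    (hEsymm : ∀ i j, E i j ↔ E j i) (hEirr : ∀ i, ¬ E i i)
    (R : V → ℕ) (hR : ∀ i, 1 ≤ R i)
    (c : ℕ → V → V → ℕ) (hc01 : ∀ k i j, c k i j ≤ 1)
    (hcsymm : ∀ k i j, c k i j = c k j i)
    (u : ℕ → V → ℕ) (hu01 : ∀ k i, u k i ≤ 1)
    (x0 : V → ℕ) (hx0 : ∀ i, x0 i ≤ 1)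
    (x s : ℕ → V → ℕ)
    (hx_init : ∀ i, x 0 i = x0 i)
    (hs_init : ∀ i, s 0 i = 0)
    (hx_rec : ∀ k i, x (k + 1) i =
      stepFn ((R i : ℤ) - (s k i : ℤ)) *
        stepFn ((x k i : ℤ) +
          (∑ j ∈ Finset.univ.filter (fun j => E j i), (c k i j : ℤ) * (x k j : ℤ)) +
          (u k i : ℤ)))
    (hs_rec : ∀ k i, s (k + 1) i = s k i + x k i)
    (y : ℕ → V → ℕ)
    (hy : ∀ k i, y k i = 1 - stepFn ((R i : ℤ) - (s k i : ℤ)))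
    (ki : V → ℕ∞)
    (hki : ∀ i, ki i = sInf {n : ℕ∞ | ∃ m : ℕ, x m i = 1 ∧ n = (m : ℕ∞)}) :
    ∀ i : V,
      (∀ m : ℕ, ki i = (m : ℕ∞) → ∀ k : ℕ,
        s k i = if k ≤ m then 0 else if m + R i + 1 ≤ k then R i + 1 else k - m) ∧
      (ki i = ⊤ → ∀ k : ℕ, s k i = 0) :=
  stmt5_general E R c u x0 hx0 x s hx_init hs_init hx_rec hs_rec ki hki
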